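/- For every nonterminal history h ∈ H \ Z and every action a ∈ A(h), the baseline-enhanced sampled history-action value has the same expectation as the plain sampled history-action value: E_{z∼ξ}[û_i^b(σ,h,a|z)] = E_{z∼ξ}[û_i(σ,h,a|z)]. -/

import Mathlib

open Finset

variable {A : Type*} [Fintype A] [DecidableEq A]

/-- The set of legal actions at history `h`: those `a` with `h ++ [a] ∈ H`. -/
def legal (H : Finset (List A)) (h : List A) : Finset A :=
  Finset.univ.filter fun a => h ++ [a] ∈ H

/-- Product of `f (h', a)` over all prefix steps `h'·a ⊑ h` of the history `h`.
With `f = ξ` this is the sampling probability `q(h)`; note `pathProd f [] = 1`. -/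
def pathProd (f : List A → A → ℝ) (h : List A) : ℝ :=
  ∏ k : Fin h.length, f (h.take (k : ℕ)) (h.get k)

/-- `π^σ(h, z)`: product of `σ (h', a)` over all prefix steps `h'·a` with `h ⊏ h'·a ⊑ z`. -/
def sfxProd (σ : List A → A → ℝ) (h z : List A) : ℝ :=
  ∏ k : Fin z.length, if h.length ≤ (k : ℕ) then σ (z.take (k : ℕ)) (z.get k) else 1

/-- `π^σ_{-i}(h)`: product of `σ (h', a)` over all prefix steps `h'·a ⊑ h` with `τ h' ≠ i`. -/
def oppProd {N : Type*} [DecidableEq N] (σ : List A → A → ℝ) (τ : List A → N) (i : N)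
    (h : List A) : ℝ :=
  ∏ k : Fin h.length, if τ (h.take (k : ℕ)) ≠ i then σ (h.take (k : ℕ)) (h.get k) else 1

/-- The expected value `u_i^σ(h) = Σ_{z ∈ Z, h ⊑ z} π^σ(h,z)·u_i(z)`. -/
def expUtil (σ : List A → A → ℝ) (u : List A → ℝ) (Z : Finset (List A)) (h : List A) : ℝ :=
  ∑ z ∈ Z.filter (fun z => h <+: z), sfxProd σ h z * u z

/-- The plain sampled history value `û_i(σ, h | z)`:
`u_i(h)` if `h = z`, `Σ_{a ∈ A(h)} σ(h,a)·û_i(σ,h,a|z)` if `h ⊏ z`, and `0` otherwise,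
where `û_i(σ,h,a|z) = û_i(σ,h·a|z)/ξ(h,a)` if `h·a ⊑ z` and `0` otherwise. -/
noncomputable def uhat (ξ σ : List A → A → ℝ) (u : List A → ℝ) (H : Finset (List A))
    (z : List A) (h : List A) : ℝ :=
  if h = z then u z
  else if h <+: z then
    ∑ a ∈ legal H h, σ h a *
      (if hpa : h ++ [a] <+: z then uhat ξ σ u H z (h ++ [a]) / ξ h a else 0)
  else 0
termination_by z.length - h.length
decreasing_by
  have := hpa.length_le
  simp only [List.length_append, List.length_singleton] at this ⊢
  omega

/-- The plain sampled history-action value `û_i(σ, h, a | z)`. -/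
noncomputable def uhatA (ξ σ : List A → A → ℝ) (u : List A → ℝ) (H : Finset (List A))
    (z : List A) (h : List A) (a : A) : ℝ :=
  if h ++ [a] <+: z then uhat ξ σ u H z (h ++ [a]) / ξ h a else 0

/-- The baseline-enhanced sampled history value `û_i^b(σ, h | z)`:
`u_i(h)` if `h = z`, `Σ_{a ∈ A(h)} σ(h,a)·û_i^b(σ,h,a|z)` if `h ⊏ z`, and `0` otherwise,
where `û_i^b(σ,h,a|z) = b(h,a) + (û_i^b(σ,h·a|z) − b(h,a))/ξ(h,a)` if `h·a ⊑ z`,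
`b(h,a)` if `h ⊏ z` and `h·a ⋢ z`, and `0` otherwise. -/
noncomputable def uhatB (ξ σ : List A → A → ℝ) (u : List A → ℝ) (H : Finset (List A))
    (b : List A → A → ℝ) (z : List A) (h : List A) : ℝ :=
  if h = z then u z
  else if h <+: z then
    ∑ a ∈ legal H h, σ h a *
      (if hpa : h ++ [a] <+: z then b h a + (uhatB ξ σ u H b z (h ++ [a]) - b h a) / ξ h a
       else b h a)
  else 0
termination_by z.length - h.length
decreasing_by
  have := hpa.length_le
  simp only [List.length_append, List.length_singleton] at this ⊢
  omega

/-- The baseline-enhanced sampled history-action value `û_i^b(σ, h, a | z)`. -/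
noncomputable def uhatBA (ξ σ : List A → A → ℝ) (u : List A → ℝ) (H : Finset (List A))
    (b : List A → A → ℝ) (z : List A) (h : List A) (a : A) : ℝ :=
  if h ++ [a] <+: z then b h a + (uhatB ξ σ u H b z (h ++ [a]) - b h a) / ξ h a
  else if h <+: z ∧ h ≠ z then b h a
  else 0

/-!
Write `q = pathProd ξ` and `D_g(z) = û^b(σ,g|z) − û(σ,g|z)`. Since `ξ` sums to one at every
nonterminal node, the sampling weights of the leaves below `g` add up to `q(g)`. For `h ⊏ z` the
difference `û^b(σ,h,a|z) − û(σ,h,a|z)` equals `b(h,a) + (D_{h·a}(z) − b(h,a)·1[h·a ⊑ z]) / ξ(h,a)`,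
so its `q`-weighted sum is `b(h,a)·q(h) − b(h,a)·q(h·a)/ξ(h,a) = 0` as soon as `D_{h·a}` has
`q`-weighted sum zero. The latter holds at every node, by induction from the leaves, because
`D_g` is the `σ`-mixture of these history-action differences.
-/

theorem List.ne_of_not_prefix {α : Type*} {h z : List α} (hp : ¬h <+: z) : h ≠ z := by
  rintro rfl
  exact hp List.prefix_rfl

theorem List.exists_append_singleton_prefix {α : Type*} {h z : List α} (hp : h <+: z)
    (hne : h ≠ z) : ∃ a, h ++ [a] <+: z := by
  obtain ⟨_ | ⟨a, t⟩, rfl⟩ := hp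
  · simp at hne
  · exact ⟨a, t, by simp⟩

theorem List.eq_of_append_singleton_prefix {α : Type*} {h z : List α} {a a' : α}
    (ha : h ++ [a] <+: z) (ha' : h ++ [a'] <+: z) : a = a' := by
  simpa using List.prefix_of_prefix_length_le ha ha' (by simp)

theorem induction_on_children {α : Type*} (H : Finset (List α)) {P : List α → Prop}
    (step : ∀ h ∈ H, (∀ a, h ++ [a] ∈ H → P (h ++ [a])) → P h) (h : List α) (hh : h ∈ H) :
    P h :=
  step h hh fun a ha => induction_on_children H step (h ++ [a]) ha
termination_by H.sup List.length - h.length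
decreasing_by
  have := Finset.le_sup (f := List.length) ha
  simp only [List.length_append, List.length_singleton] at this ⊢
  omega

theorem mem_legal {H : Finset (List A)} {h : List A} {a : A} :
    a ∈ legal H h ↔ h ++ [a] ∈ H := by
  simp [legal]

omit [Fintype A] [DecidableEq A] in
theorem pathProd_append (f : List A → A → ℝ) (h : List A) (a : A) :
    pathProd f (h ++ [a]) = pathProd f h * f h a := by
  unfold pathProd
  rw [← Fin.prod_congr' _ (by simp : (h ++ [a]).length = h.length + 1).symm,
    Fin.prod_univ_castSucc]
  congr 1
  · refine Finset.prod_congr rfl fun k _ => ?_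
    simp [List.take_append_of_le_length k.2.le, List.getElem_append_left k.2]
  · simp

theorem filter_prefix_eq_singleton {α : Type*} [DecidableEq α] {H Z : Finset (List α)}
    (hZH : Z ⊆ H) (hterm : ∀ z ∈ Z, ∀ h ∈ H, z <+: h → z = h) {z : List α} (hz : z ∈ Z) :
    {w ∈ Z | z <+: w} = {z} := by
  ext w
  simp only [mem_filter, mem_singleton]
  constructor
  · rintro ⟨hw, hzw⟩
    exact (hterm z hz w (hZH hw) hzw).symm
  · rintro rfl
    exact ⟨hz, List.prefix_rfl⟩

section GameTree

variable {H Z : Finset (List A)}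

theorem sum_filter_prefix_eq_sum_legal (hclosed : ∀ h ∈ H, ∀ h' : List A, h' <+: h → h' ∈ H)
    (hZH : Z ⊆ H) (f : List A → ℝ) {h : List A} (hhZ : h ∉ Z) :
    ∑ z ∈ Z with h <+: z, f z = ∑ a ∈ legal H h, ∑ z ∈ Z with h ++ [a] <+: z, f z := by
  rw [← sum_biUnion]
  · congr 1
    ext z
    simp only [mem_biUnion, mem_filter, mem_legal]
    constructor
    · rintro ⟨hz, hp⟩
      obtain ⟨a, hpa⟩ :=
        List.exists_append_singleton_prefix hp (ne_of_mem_of_not_mem hz hhZ).symm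
      exact ⟨a, hclosed z (hZH hz) _ hpa, hz, hpa⟩
    · rintro ⟨a, -, hz, hpa⟩
      exact ⟨hz, (h.prefix_append [a]).trans hpa⟩
  · intro a _ a' _ hne
    simp only [Function.onFun, disjoint_left, mem_filter]
    rintro z ⟨-, hpa⟩ ⟨-, hpa'⟩
    exact hne (List.eq_of_append_singleton_prefix hpa hpa')

theorem sum_filter_prefix_pathProd (hclosed : ∀ h ∈ H, ∀ h' : List A, h' <+: h → h' ∈ H)
    (hZH : Z ⊆ H) (hterm : ∀ z ∈ Z, ∀ h ∈ H, z <+: h → z = h) {ξ : List A → A → ℝ}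
    (hξsum : ∀ h ∈ H, h ∉ Z → ∑ a ∈ legal H h, ξ h a = 1) :
    ∀ h ∈ H, ∑ z ∈ Z with h <+: z, pathProd ξ z = pathProd ξ h := by
  refine induction_on_children H fun h hh ih => ?_
  by_cases hhZ : h ∈ Z
  · rw [filter_prefix_eq_singleton hZH hterm hhZ, sum_singleton]
  · calc ∑ z ∈ Z with h <+: z, pathProd ξ z
        = ∑ a ∈ legal H h, pathProd ξ (h ++ [a]) := by
          rw [sum_filter_prefix_eq_sum_legal hclosed hZH _ hhZ]
          exact sum_congr rfl fun a ha => ih a (mem_legal.1 ha)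
      _ = pathProd ξ h := by
          simp_rw [pathProd_append, ← mul_sum, hξsum h hh hhZ, mul_one]

end GameTree

section SampledValues

variable {ξ σ : List A → A → ℝ} {u : List A → ℝ} {H : Finset (List A)} {b : List A → A → ℝ}
  {z h : List A}

theorem uhat_self : uhat ξ σ u H z z = u z := by
  rw [uhat, if_pos rfl]

theorem uhatB_self : uhatB ξ σ u H b z z = u z := by
  rw [uhatB, if_pos rfl]

theorem uhat_of_not_prefix (hp : ¬h <+: z) : uhat ξ σ u H z h = 0 := by
  rw [uhat, if_neg (List.ne_of_not_prefix hp), if_neg hp]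

theorem uhatB_of_not_prefix (hp : ¬h <+: z) : uhatB ξ σ u H b z h = 0 := by
  rw [uhatB, if_neg (List.ne_of_not_prefix hp), if_neg hp]

theorem uhatB_sub_uhat (hne : h ≠ z) :
    uhatB ξ σ u H b z h - uhat ξ σ u H z h =
      ∑ a ∈ legal H h, σ h a * (uhatBA ξ σ u H b z h a - uhatA ξ σ u H z h a) := by
  by_cases hp : h <+: z
  · rw [uhatB, uhat]
    simp only [hne, hp, if_false, if_true, dite_eq_ite, uhatBA, uhatA, ne_eq, not_false_eq_true,
      and_self, ← sum_sub_distrib, ← mul_sub]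
  · have hpa : ∀ a, ¬h ++ [a] <+: z := fun a hpa => hp ((h.prefix_append [a]).trans hpa)
    simp [uhatB_of_not_prefix hp, uhat_of_not_prefix hp, uhatBA, uhatA, hpa, hp]

theorem uhatBA_sub_uhatA (hne : h ≠ z) (a : A) :
    uhatBA ξ σ u H b z h a - uhatA ξ σ u H z h a =
      (if h <+: z then b h a else 0) +
        (uhatB ξ σ u H b z (h ++ [a]) - uhat ξ σ u H z (h ++ [a]) -
          if h ++ [a] <+: z then b h a else 0) / ξ h a := by
  by_cases hpa : h ++ [a] <+: z
  · simp only [uhatBA, uhatA, hpa, if_true, (h.prefix_append [a]).trans hpa]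
    ring
  · simp [uhatBA, uhatA, hpa, hne, uhatB_of_not_prefix hpa, uhat_of_not_prefix hpa]

end SampledValues

section Unbiasedness

variable {H Z : Finset (List A)} {ξ σ : List A → A → ℝ} {u : List A → ℝ} {b : List A → A → ℝ}

theorem sum_pathProd_mul_uhatBA_sub_uhatA_eq_zero
    (hclosed : ∀ h ∈ H, ∀ h' : List A, h' <+: h → h' ∈ H) (hZH : Z ⊆ H)
    (hterm : ∀ z ∈ Z, ∀ h ∈ H, z <+: h → z = h)
    (hξpos : ∀ h ∈ H, h ∉ Z → ∀ a ∈ legal H h, 0 < ξ h a)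
    (hξsum : ∀ h ∈ H, h ∉ Z → ∑ a ∈ legal H h, ξ h a = 1)
    {h : List A} (hh : h ∈ H) (hhZ : h ∉ Z) {a : A} (ha : a ∈ legal H h)
    (hchild : ∑ z ∈ Z, pathProd ξ z *
      (uhatB ξ σ u H b z (h ++ [a]) - uhat ξ σ u H z (h ++ [a])) = 0) :
    ∑ z ∈ Z, pathProd ξ z * (uhatBA ξ σ u H b z h a - uhatA ξ σ u H z h a) = 0 := by
  have hξ : ξ h a ≠ 0 := (hξpos h hh hhZ a ha).ne'
  have hq := sum_filter_prefix_pathProd hclosed hZH hterm hξsum h hh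
  have hqa := sum_filter_prefix_pathProd hclosed hZH hterm hξsum (h ++ [a]) (mem_legal.1 ha)
  rw [pathProd_append] at hqa
  calc ∑ z ∈ Z, pathProd ξ z * (uhatBA ξ σ u H b z h a - uhatA ξ σ u H z h a)
      = ∑ z ∈ Z, (b h a * (if h <+: z then pathProd ξ z else 0) +
          (pathProd ξ z * (uhatB ξ σ u H b z (h ++ [a]) - uhat ξ σ u H z (h ++ [a])) -
            b h a * if h ++ [a] <+: z then pathProd ξ z else 0) / ξ h a) :=
        sum_congr rfl fun z hz => by
          rw [uhatBA_sub_uhatA (ne_of_mem_of_not_mem hz hhZ).symm]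
          split_ifs <;> ring
    _ = b h a * pathProd ξ h + (0 - b h a * (pathProd ξ h * ξ h a)) / ξ h a := by
        rw [sum_add_distrib, ← sum_div, sum_sub_distrib, ← mul_sum, ← mul_sum, ← sum_filter,
          ← sum_filter, hq, hqa, hchild]
    _ = 0 := by
        field_simp
        ring

theorem sum_pathProd_mul_uhatB_sub_uhat_eq_zero
    (hclosed : ∀ h ∈ H, ∀ h' : List A, h' <+: h → h' ∈ H) (hZH : Z ⊆ H)
    (hterm : ∀ z ∈ Z, ∀ h ∈ H, z <+: h → z = h)
    (hξpos : ∀ h ∈ H, h ∉ Z → ∀ a ∈ legal H h, 0 < ξ h a)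
    (hξsum : ∀ h ∈ H, h ∉ Z → ∑ a ∈ legal H h, ξ h a = 1) :
    ∀ h ∈ H, ∑ z ∈ Z, pathProd ξ z * (uhatB ξ σ u H b z h - uhat ξ σ u H z h) = 0 := by
  refine induction_on_children H fun h hh ih => ?_
  by_cases hhZ : h ∈ Z
  · refine sum_eq_zero fun z hz => ?_
    by_cases hp : h <+: z
    · obtain rfl := hterm h hhZ z (hZH hz) hp
      rw [uhatB_self, uhat_self, sub_self, mul_zero]
    · rw [uhatB_of_not_prefix hp, uhat_of_not_prefix hp, sub_self, mul_zero]
  · calc ∑ z ∈ Z, pathProd ξ z * (uhatB ξ σ u H b z h - uhat ξ σ u H z h)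
        = ∑ a ∈ legal H h, σ h a *
            ∑ z ∈ Z, pathProd ξ z * (uhatBA ξ σ u H b z h a - uhatA ξ σ u H z h a) := by
          simp_rw [mul_sum]
          rw [sum_comm]
          refine sum_congr rfl fun z hz => ?_
          rw [uhatB_sub_uhat (ne_of_mem_of_not_mem hz hhZ).symm, mul_sum]
          exact sum_congr rfl fun a _ => by ring
      _ = 0 := sum_eq_zero fun a ha => by
          rw [sum_pathProd_mul_uhatBA_sub_uhatA_eq_zero hclosed hZH hterm hξpos hξsum hh hhZ ha
            (ih a (mem_legal.1 ha)), mul_zero]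

end Unbiasedness

theorem baseline_enhanced_value_unbiased_general
    (H Z : Finset (List A))
    (hclosed : ∀ h ∈ H, ∀ h' : List A, h' <+: h → h' ∈ H)
    (hZH : Z ⊆ H)
    (hterm : ∀ z ∈ Z, ∀ h ∈ H, z <+: h → z = h)
    (ξ : List A → A → ℝ)
    (hξpos : ∀ h ∈ H, h ∉ Z → ∀ a ∈ legal H h, 0 < ξ h a)
    (hξsum : ∀ h ∈ H, h ∉ Z → ∑ a ∈ legal H h, ξ h a = 1)
    (σ : List A → A → ℝ)
    (u : List A → ℝ) (b : List A → A → ℝ)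
    (h : List A) (hh : h ∈ H) (hhnt : h ∉ Z) (a : A) (ha : a ∈ legal H h) :
    (∑ z ∈ Z, pathProd ξ z * uhatBA ξ σ u H b z h a)
      = ∑ z ∈ Z, pathProd ξ z * uhatA ξ σ u H z h a := by
  rw [← sub_eq_zero, ← sum_sub_distrib]
  simp_rw [← mul_sub]
  exact sum_pathProd_mul_uhatBA_sub_uhatA_eq_zero hclosed hZH hterm hξpos hξsum hh hhnt ha
    (sum_pathProd_mul_uhatB_sub_uhat_eq_zero hclosed hZH hterm hξpos hξsum _ (mem_legal.1 ha))

/-- **Baseline-enhanced values are unbiased estimates of the plain sampled values**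
(Lemma 5 in the paper). For every nonterminal `h` and legal action `a` at `h`,
`E_{z∼ξ}[û_i^b(σ,h,a|z)] = E_{z∼ξ}[û_i(σ,h,a|z)]`. -/
theorem baseline_enhanced_value_unbiased
    (H Z : Finset (List A))
    (hempty : ([] : List A) ∈ H)
    (hclosed : ∀ h ∈ H, ∀ h' : List A, h' <+: h → h' ∈ H)
    (hZH : Z ⊆ H)
    (hreach : ∀ h ∈ H, ∃ z ∈ Z, h <+: z)
    (hterm : ∀ z ∈ Z, ∀ h ∈ H, z <+: h → z = h)
    (hlegal : ∀ h ∈ H, h ∉ Z → (legal H h).Nonempty)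
    (ξ : List A → A → ℝ)
    (hξpos : ∀ h ∈ H, h ∉ Z → ∀ a ∈ legal H h, 0 < ξ h a)
    (hξsum : ∀ h ∈ H, h ∉ Z → ∑ a ∈ legal H h, ξ h a = 1)
    (σ : List A → A → ℝ)
    (hσnn : ∀ h ∈ H, h ∉ Z → ∀ a ∈ legal H h, 0 ≤ σ h a)
    (hσsum : ∀ h ∈ H, h ∉ Z → ∑ a ∈ legal H h, σ h a = 1)
    (u : List A → ℝ) (b : List A → A → ℝ)
    (h : List A) (hh : h ∈ H) (hhnt : h ∉ Z) (a : A) (ha : a ∈ legal H h) :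
    (∑ z ∈ Z, pathProd ξ z * uhatBA ξ σ u H b z h a)
      = ∑ z ∈ Z, pathProd ξ z * uhatA ξ σ u H z h a :=
  baseline_enhanced_value_unbiased_general H Z hclosed hZH hterm ξ hξpos hξsum σ u b h hh hhnt a ha
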